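/- Let 𝓤 ∈ M_ℍ(n,n) act on ℍⁿ ≅ ℝ^{4n} by q ↦ 𝓤q, let ũ be a real C² function on ℝ^{4n}, and set u(q) = ũ(𝓤q). Then the Baston operator transforms covariantly: for every q ∈ ℝ^{4n}, the matrix identity (Δ_{AB}u(q))_{A,B} = conj(τ(𝓤))ᵗ · (Δ_{CD}ũ(𝓤q))_{C,D} · conj(τ(𝓤)) holds; equivalently, Δu(q) = Σ_{C,D} (Δ_{CD}ũ)(𝓤q) · (conj(τ(𝓤)).ω^C)∧(conj(τ(𝓤)).ω^D), so Δ is invariant under quaternionic linear transformations (with the transformed basis ω̃^C = conj(τ(𝓤)).ω^C). -/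

import Mathlib

open scoped Quaternion
open Matrix Sum

noncomputable section

/-- The complex part `a` in the decomposition `q = a + b·j` of a quaternion. -/
def qa (q : ℍ[ℝ]) : ℂ := ⟨q.re, q.imI⟩

/-- The complex part `b` in the decomposition `q = a + b·j` of a quaternion. -/
def qb (q : ℍ[ℝ]) : ℂ := ⟨q.imJ, q.imK⟩

/-- Entrywise complex conjugation of a complex matrix. -/
def conjM {m k : Type*} (M : Matrix m k ℂ) : Matrix m k ℂ := M.map (starRingEnd ℂ)

/-- The embedding τ : M_ℍ(p,m) → M_ℂ(2p,2m), τ(a + b·j) = [[a, −b],[conj b, conj a]]. -/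
def tau {p m : ℕ} (M : Matrix (Fin p) (Fin m) ℍ[ℝ]) :
    Matrix (Fin p ⊕ Fin p) (Fin m ⊕ Fin m) ℂ :=
  Matrix.fromBlocks (M.map qa) (-(M.map qb)) (conjM (M.map qb)) (conjM (M.map qa))

/-- The standard symplectic matrix J = [[0, Iₙ],[−Iₙ, 0]]. -/
def Jmat (n : ℕ) : Matrix (Fin n ⊕ Fin n) (Fin n ⊕ Fin n) ℂ :=
  Matrix.fromBlocks 0 1 (-1) 0

/-- index set {0,…,2n−1}, as two blocks. -/
abbrev Idx (n : ℕ) := Fin n ⊕ Fin n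

/-- ℂ^{2n}. -/
abbrev Vc (n : ℕ) := Idx n → ℂ

/-- The exterior algebra of ℂ^{2n}. -/
abbrev EA (n : ℕ) := ExteriorAlgebra ℂ (Vc n)

/-- Basis 1-vectors ω^A of the exterior algebra. -/
def ω {n : ℕ} (A : Idx n) : EA n := ExteriorAlgebra.ι ℂ (Pi.single A 1)

/-- Ω_{2n} = ω⁰∧ω^n∧ω¹∧ω^{n+1}∧…∧ω^{n−1}∧ω^{2n−1}. -/
def Ωn (n : ℕ) : EA n := (List.ofFn fun l : Fin n => ω (inl l) * ω (inr l)).prod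

/-- β_n = Σ_l ω^l∧ω^{n+l}. -/
def βn (n : ℕ) : EA n := ∑ l : Fin n, ω (inl l) * ω (inr l)

/-- Induced action of a 2n×2n complex matrix on the exterior algebra,
determined by N.ω^A = Σ_B N_{AB} ω^B. -/
def actE {n : ℕ} (N : Matrix (Idx n) (Idx n) ℂ) : EA n →ₐ[ℂ] EA n :=
  ExteriorAlgebra.map (Matrix.mulVecLin Nᵀ)

/-- ℝ^{4n}. -/
abbrev V4 (n : ℕ) := Fin (4 * n) → ℝ

/-- The coordinate index 4l+β. -/
def X {n : ℕ} (l : Fin n) (β : Fin 4) : Fin (4 * n) :=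
  ⟨4 * l.val + β.val, by have h1 := l.isLt; have h2 := β.isLt; omega⟩

/-- Partial derivative of a complex-valued function on ℝ^{4n}. -/
def pd {n : ℕ} (a : Fin (4 * n)) (f : V4 n → ℂ) : V4 n → ℂ :=
  fun q => fderiv ℝ f q (Pi.single a 1)

/-- The operators ∇_{Aα}, α = 0' (α=0) or 1' (α=1). -/
def nabla {n : ℕ} (A : Idx n) (α : Fin 2) (f : V4 n → ℂ) : V4 n → ℂ :=
  fun q =>
    match A with
    | Sum.inl l =>
        if α = 0 then pd (X l 0) f q + Complex.I * pd (X l 1) f q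
        else -pd (X l 2) f q - Complex.I * pd (X l 3) f q
    | Sum.inr l =>
        if α = 0 then pd (X l 2) f q - Complex.I * pd (X l 3) f q
        else pd (X l 0) f q - Complex.I * pd (X l 1) f q

/-- ∇_{Aα} applied to a real-valued function. -/
def nablaR {n : ℕ} (A : Idx n) (α : Fin 2) (u : V4 n → ℝ) : V4 n → ℂ :=
  nabla A α (fun x => ((u x : ℝ) : ℂ))

/-- Δ_{AB}u = ½(∇_{A0'}∇_{B1'}u − ∇_{B0'}∇_{A1'}u). -/
def Delta {n : ℕ} (A B : Idx n) (u : V4 n → ℝ) : V4 n → ℂ :=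
  fun q => (1 / 2 : ℂ) *
    (nabla A 0 (nabla B 1 (fun x => ((u x : ℝ) : ℂ))) q
      - nabla B 0 (nabla A 1 (fun x => ((u x : ℝ) : ℂ))) q)

/-- The Baston operator Δu = Σ_{A,B} Δ_{AB}u · ω^A∧ω^B. -/
def Baston {n : ℕ} (u : V4 n → ℝ) (q : V4 n) : EA n :=
  ∑ A : Idx n, ∑ B : Idx n, Delta A B u q • (ω A * ω B)

/-- The quaternion units. -/
def iH : ℍ[ℝ] := ⟨0, 1, 0, 0⟩
def jH : ℍ[ℝ] := ⟨0, 0, 1, 0⟩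
def kH : ℍ[ℝ] := ⟨0, 0, 0, 1⟩

/-- Partial derivative of a quaternion-valued function on ℝ^{4n}. -/
def pdH {n : ℕ} (a : Fin (4 * n)) (f : V4 n → ℍ[ℝ]) : V4 n → ℍ[ℝ] :=
  fun q => fderiv ℝ f q (Pi.single a 1)

/-- Partial derivative of a real-valued function on ℝ^{4n}. -/
def pdR {n : ℕ} (a : Fin (4 * n)) (f : V4 n → ℝ) : V4 n → ℝ :=
  fun q => fderiv ℝ f q (Pi.single a 1)

/-- ∂u/∂q_k = (∂_{x_{4k}} − i∂_{x_{4k+1}} − j∂_{x_{4k+2}} − k∂_{x_{4k+3}})u for real u. -/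
def dq {n : ℕ} (k : Fin n) (u : V4 n → ℝ) : V4 n → ℍ[ℝ] :=
  fun q => ⟨pdR (X k 0) u q, -pdR (X k 1) u q, -pdR (X k 2) u q, -pdR (X k 3) u q⟩

/-- ∂/∂q̄_l = ∂_{x_{4l}} + i∂_{x_{4l+1}} + j∂_{x_{4l+2}} + k∂_{x_{4l+3}} on ℍ-valued functions. -/
def dqbar {n : ℕ} (l : Fin n) (f : V4 n → ℍ[ℝ]) : V4 n → ℍ[ℝ] :=
  fun q => pdH (X l 0) f q + iH * pdH (X l 1) f q + jH * pdH (X l 2) f q + kH * pdH (X l 3) f q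

/-- The quaternionic Hessian of a real function u. -/
def Hess {n : ℕ} (u : V4 n → ℝ) (q : V4 n) : Matrix (Fin n) (Fin n) ℍ[ℝ] :=
  Matrix.of fun l k => dqbar l (dq k u) q

/-- ω^I = ω^{i₁}∧…∧ω^{i_p} for a multi-index I. -/
def ωProd {n p : ℕ} (I : Fin p → Idx n) : EA n :=
  (List.ofFn fun j => ω (I j)).prod

/-- The Λ^pℂ^{2n}-valued function with coefficient functions f: F = Σ_I f_I ω^I. -/
def formVal {n p : ℕ} (f : (Fin p → Idx n) → V4 n → ℂ) (q : V4 n) : EA n :=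
  ∑ I : Fin p → Idx n, f I q • ωProd I

/-- Coefficients of d_α F for F with coefficients f:
d_αF = Σ_{A,I} ∇_{Aα}f_I · ω^A∧ω^I. -/
def dcoef {n p : ℕ} (α : Fin 2) (f : (Fin p → Idx n) → V4 n → ℂ) :
    (Fin (p + 1) → Idx n) → V4 n → ℂ :=
  fun J => nabla (J 0) α (f (Fin.tail J))

/-- Coefficients of the wedge product F∧G. -/
def wedgeCoef {n p q : ℕ} (f : (Fin p → Idx n) → V4 n → ℂ)
    (g : (Fin q → Idx n) → V4 n → ℂ) : (Fin (p + q) → Idx n) → V4 n → ℂ :=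
  fun J x => f (fun i => J (Fin.castAdd q i)) x * g (fun i => J (Fin.natAdd p i)) x

/-- The complex coordinate functions z^{Aα}. -/
def zc {n : ℕ} (A : Idx n) (α : Fin 2) : V4 n → ℂ :=
  fun x =>
    match A with
    | Sum.inl l => if α = 0 then ⟨x (X l 0), -x (X l 1)⟩ else ⟨-x (X l 2), x (X l 3)⟩
    | Sum.inr l => if α = 0 then ⟨x (X l 2), x (X l 3)⟩ else ⟨x (X l 0), x (X l 1)⟩

/-- The quaternionic vector associated to a point of ℝ^{4n}. -/
def quatv {n : ℕ} (v : V4 n) : Fin n → ℍ[ℝ] :=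
  fun l => ⟨v (X l 0), v (X l 1), v (X l 2), v (X l 3)⟩

/-- The four real components of a quaternion. -/
def comp4 (q : ℍ[ℝ]) : Fin 4 → ℝ := ![q.re, q.imI, q.imJ, q.imK]

/-- The real-linear action of a quaternionic matrix 𝓤 on ℝ^{4n} ≅ ℍⁿ, q ↦ 𝓤q. -/
def act {n : ℕ} (U : Matrix (Fin n) (Fin n) ℍ[ℝ]) (v : V4 n) : V4 n :=
  fun a => comp4 ((U *ᵥ quatv v) ⟨a.val / 4, by have := a.isLt; omega⟩)
    ⟨a.val % 4, by omega⟩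

/-!
By the chain rule, `∂_{x_{4l+β}} (f ∘ 𝓤)` at `q` is the real combination of the partials of `f`
at `𝓤q` whose coefficients are the components of `𝓤_{ml} · e_β`, `e_β ∈ {1, i, j, k}`.
A check on each quaternion shows that, in the complex combinations `∇_{Aα}`, left
multiplication by `𝓤_{ml}` acts on the pair `(∇_{mα}, ∇_{(n+m)α})` through the corresponding
`2 × 2` block of `conj τ(𝓤)`, so `∇_{Aα}(f ∘ 𝓤) = Σ_C conj τ(𝓤)_{CA} (∇_{Cα} f) ∘ 𝓤`.
Applying this twice gives the matrix identity for `Δ_{AB}`; the exterior-algebra form follows by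
expanding `conj τ(𝓤).ω^C` in the basis `ω^A`.
-/

section

variable {n : ℕ}

lemma X_eq_finProdFinEquiv (l : Fin n) (β : Fin 4) :
    X l β = (finProdFinEquiv.trans (finCongr (mul_comm n 4))) (l, β) := by
  ext
  simp only [X, Equiv.trans_apply, finProdFinEquiv_apply_val, finCongr_apply, Fin.val_cast]
  ring

lemma X_injective : Function.Injective fun p : Fin n × Fin 4 => X p.1 p.2 := by
  intro p p' h
  simpa only [X_eq_finProdFinEquiv, Equiv.apply_eq_iff_eq] using h

lemma X_inj {l m : Fin n} {β γ : Fin 4} : X l β = X m γ ↔ l = m ∧ β = γ :=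
  (X_injective.eq_iff (a := (l, β)) (b := (m, γ))).trans Prod.ext_iff

lemma sum_eq_sum_X {M : Type*} [AddCommMonoid M] (f : Fin (4 * n) → M) :
    ∑ a, f a = ∑ m : Fin n, ∑ γ : Fin 4, f (X m γ) := by
  simp only [X_eq_finProdFinEquiv]
  rw [← Fintype.sum_prod_type',
    Equiv.sum_comp (finProdFinEquiv.trans (finCongr (mul_comm n 4))) f]

def quatBasis : Fin 4 → ℍ[ℝ] := ![1, iH, jH, kH]

lemma quatv_single (l : Fin n) (β : Fin 4) :
    quatv (Pi.single (X l β) 1) = Pi.single l (quatBasis β) := by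
  funext m
  rcases eq_or_ne m l with rfl | hm
  · rw [Pi.single_eq_same]
    fin_cases β <;> ext <;> simp [quatv, X_inj, quatBasis, iH, jH, kH]
  · ext <;> simp [quatv, X_inj, hm]

lemma comp4_add (p q : ℍ[ℝ]) : comp4 (p + q) = comp4 p + comp4 q := by
  ext γ; fin_cases γ <;> simp [comp4]

lemma comp4_smul (c : ℝ) (p : ℍ[ℝ]) : comp4 (c • p) = c • comp4 p := by
  ext γ; fin_cases γ <;> simp [comp4]

lemma quatv_add (v w : V4 n) : quatv (v + w) = quatv v + quatv w := by
  funext m; ext <;> rfl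

lemma quatv_smul (c : ℝ) (v : V4 n) : quatv (c • v) = c • quatv v := by
  funext m; ext <;> rfl

def actCLM (U : Matrix (Fin n) (Fin n) ℍ[ℝ]) : V4 n →L[ℝ] V4 n :=
  LinearMap.toContinuousLinearMap
    { toFun := act U
      map_add' := fun v w => by
        funext a
        simp only [act, quatv_add, mulVec_add, Pi.add_apply, comp4_add]
      map_smul' := fun c v => by
        funext a
        simp only [act, quatv_smul, mulVec_smul, Pi.smul_apply, comp4_smul, RingHom.id_apply] }

lemma coe_actCLM (U : Matrix (Fin n) (Fin n) ℍ[ℝ]) : ⇑(actCLM U) = act U := rfl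

lemma act_apply_X (U : Matrix (Fin n) (Fin n) ℍ[ℝ]) (v : V4 n) (m : Fin n) (γ : Fin 4) :
    act U v (X m γ) = comp4 ((U *ᵥ quatv v) m) γ := by
  have hm : (⟨(X m γ).val / 4, by have := (X m γ).isLt; omega⟩ : Fin n) = m :=
    Fin.ext (by simp only [X]; omega)
  have hγ : (⟨(X m γ).val % 4, by omega⟩ : Fin 4) = γ :=
    Fin.ext (by simp only [X]; omega)
  rw [act, hm, hγ]

lemma act_single_apply_X (U : Matrix (Fin n) (Fin n) ℍ[ℝ]) (l m : Fin n) (β γ : Fin 4) :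
    act U (Pi.single (X l β) 1) (X m γ) = comp4 (U m l * quatBasis β) γ := by
  rw [act_apply_X, quatv_single, mulVec_single]
  rfl

lemma clm_apply_eq_sum_X {M : Type*} [AddCommGroup M] [Module ℝ M] [TopologicalSpace M]
    (L : V4 n →L[ℝ] M) (v : V4 n) :
    L v = ∑ m : Fin n, ∑ γ : Fin 4, v (X m γ) • L (Pi.single (X m γ) 1) := by
  rw [← sum_eq_sum_X fun a => v a • L (Pi.single a 1)]
  conv_lhs => rw [← (Pi.basisFun ℝ (Fin (4 * n))).sum_repr v]
  simp only [map_sum, map_smul, Pi.basisFun_repr, Pi.basisFun_apply]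

lemma pd_comp_act (U : Matrix (Fin n) (Fin n) ℍ[ℝ]) {f : V4 n → ℂ} {q : V4 n}
    (hf : DifferentiableAt ℝ f (act U q)) (l : Fin n) (β : Fin 4) :
    pd (X l β) (fun x => f (act U x)) q
      = ∑ m : Fin n, ∑ γ : Fin 4, comp4 (U m l * quatBasis β) γ • pd (X m γ) f (act U q) := by
  have hchain : HasFDerivAt (fun x => f (act U x))
      ((fderiv ℝ f (act U q)).comp (actCLM U)) q :=
    hf.hasFDerivAt.comp q (actCLM U).hasFDerivAt
  rw [pd, hchain.fderiv, ContinuousLinearMap.comp_apply, clm_apply_eq_sum_X]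
  simp only [coe_actCLM, act_single_apply_X, pd]

def nablaCoef (A : Idx n) (α : Fin 2) : Fin 4 → ℂ :=
  match A with
  | inl _ => if α = 0 then ![1, Complex.I, 0, 0] else ![0, 0, -1, -Complex.I]
  | inr _ => if α = 0 then ![0, 0, 1, -Complex.I] else ![1, -Complex.I, 0, 0]

lemma nabla_eq_sum (A : Idx n) (α : Fin 2) (f : V4 n → ℂ) (q : V4 n) :
    nabla A α f q = ∑ β : Fin 4, nablaCoef A α β * pd (X (Sum.elim id id A) β) f q := by
  rcases A with l | l <;> fin_cases α <;>
    simp [nabla, nablaCoef, Fin.sum_univ_four] <;> ring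

lemma sum_nablaCoef_mul_comp4 (U : Matrix (Fin n) (Fin n) ℍ[ℝ]) (A : Idx n) (α : Fin 2)
    (m : Fin n) (γ : Fin 4) :
    ∑ β : Fin 4, nablaCoef A α β * comp4 (U m (Sum.elim id id A) * quatBasis β) γ
      = conjM (tau U) (inl m) A * nablaCoef (inl m) α γ
        + conjM (tau U) (inr m) A * nablaCoef (inr m) α γ := by
  rcases A with l | l <;> fin_cases α <;> fin_cases γ <;>
    simp [nablaCoef, conjM, tau, qa, qb, comp4, quatBasis, iH, jH, kH, Fin.sum_univ_four,
      Complex.ext_iff]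

lemma nabla_comp_act (U : Matrix (Fin n) (Fin n) ℍ[ℝ]) {f : V4 n → ℂ} {q : V4 n}
    (hf : DifferentiableAt ℝ f (act U q)) (A : Idx n) (α : Fin 2) :
    nabla A α (fun x => f (act U x)) q
      = ∑ C : Idx n, conjM (tau U) C A * nabla C α f (act U q) := by
  calc nabla A α (fun x => f (act U x)) q
      = ∑ m : Fin n, ∑ γ : Fin 4,
          (∑ β : Fin 4, nablaCoef A α β * comp4 (U m (Sum.elim id id A) * quatBasis β) γ)
            * pd (X m γ) f (act U q) := by
        simp only [nabla_eq_sum, pd_comp_act U hf, Finset.mul_sum, Finset.sum_mul,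
          Complex.real_smul, mul_assoc]
        rw [Finset.sum_comm]
        exact Finset.sum_congr rfl fun m _ => Finset.sum_comm
    _ = ∑ m : Fin n, ∑ γ : Fin 4,
          (conjM (tau U) (inl m) A * nablaCoef (inl m) α γ
            + conjM (tau U) (inr m) A * nablaCoef (inr m) α γ) * pd (X m γ) f (act U q) := by
        simp only [sum_nablaCoef_mul_comp4]
    _ = ∑ C : Idx n, conjM (tau U) C A * nabla C α f (act U q) := by
        simp only [Fintype.sum_sum_type, nabla_eq_sum, Sum.elim_inl, Sum.elim_inr, id,
          Finset.mul_sum, add_mul, Finset.sum_add_distrib, mul_assoc]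

lemma pd_sum_mul {ι : Type*} [Fintype ι] (a : Fin (4 * n)) (c : ι → ℂ) {g : ι → V4 n → ℂ}
    {q : V4 n} (hg : ∀ i, DifferentiableAt ℝ (g i) q) :
    pd a (fun x => ∑ i, c i * g i x) q = ∑ i, c i * pd a (g i) q := by
  have hsum : HasFDerivAt (fun x => ∑ i, c i * g i x) (∑ i, c i • fderiv ℝ (g i) q) q :=
    HasFDerivAt.fun_sum fun i _ => (hg i).hasFDerivAt.const_mul (c i)
  simp [pd, hsum.fderiv]

lemma nabla_sum_mul {ι : Type*} [Fintype ι] (A : Idx n) (α : Fin 2) (c : ι → ℂ)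
    {g : ι → V4 n → ℂ} {q : V4 n} (hg : ∀ i, DifferentiableAt ℝ (g i) q) :
    nabla A α (fun x => ∑ i, c i * g i x) q = ∑ i, c i * nabla A α (g i) q := by
  simp only [nabla_eq_sum, pd_sum_mul _ c hg, Finset.mul_sum]
  rw [Finset.sum_comm]
  exact Finset.sum_congr rfl fun i _ => Finset.sum_congr rfl fun β _ => mul_left_comm _ _ _

lemma differentiable_pd {f : V4 n → ℂ} (hf : ContDiff ℝ 2 f) (a : Fin (4 * n)) :
    Differentiable ℝ (pd a f) :=
  ((hf.fderiv_right (by norm_num)).differentiable one_ne_zero).clm_apply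
    (differentiable_const _)

lemma differentiable_nabla {f : V4 n → ℂ} (hf : ContDiff ℝ 2 f) (A : Idx n) (α : Fin 2) :
    Differentiable ℝ (nabla A α f) := by
  rw [show nabla A α f = _ from funext (nabla_eq_sum A α f)]
  exact Differentiable.fun_sum fun β _ => (differentiable_pd hf _).const_mul _

lemma nabla_nabla_comp_act (U : Matrix (Fin n) (Fin n) ℍ[ℝ]) {f : V4 n → ℂ}
    (hf : ContDiff ℝ 2 f) (q : V4 n) (A B : Idx n) :
    nabla A 0 (nabla B 1 (fun x => f (act U x))) q
      = ∑ C : Idx n, ∑ D : Idx n,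
          conjM (tau U) C A * conjM (tau U) D B * nabla C 0 (nabla D 1 f) (act U q) := by
  have hinner : nabla B 1 (fun x => f (act U x))
      = fun x => ∑ D : Idx n, conjM (tau U) D B * nabla D 1 f (act U x) :=
    funext fun x => nabla_comp_act U (hf.differentiable two_ne_zero _) B 1
  have houter_diff : ∀ D : Idx n, DifferentiableAt ℝ (fun x => nabla D 1 f (act U x)) q :=
    fun D => (differentiable_nabla hf D 1 _).comp q (actCLM U).differentiableAt
  rw [hinner, nabla_sum_mul A 0 _ houter_diff]
  simp only [nabla_comp_act U (differentiable_nabla hf _ 1 _) A 0, Finset.mul_sum]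
  rw [Finset.sum_comm]
  exact Finset.sum_congr rfl fun C _ => Finset.sum_congr rfl fun D _ => by ring

lemma Delta_comp_act (U : Matrix (Fin n) (Fin n) ℍ[ℝ]) {u : V4 n → ℝ} (hu : ContDiff ℝ 2 u)
    (q : V4 n) (A B : Idx n) :
    Delta A B (fun y => u (act U y)) q
      = ∑ C : Idx n, ∑ D : Idx n,
          conjM (tau U) C A * Delta C D u (act U q) * conjM (tau U) D B := by
  have hc : ContDiff ℝ 2 fun x => (u x : ℂ) := Complex.ofRealCLM.contDiff.comp hu
  have hAB := nabla_nabla_comp_act U hc q A B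
  have hBA := nabla_nabla_comp_act U hc q B A
  rw [Delta, hAB, hBA, Finset.sum_comm (f := fun C D => conjM (tau U) C B * _ * _),
    ← Finset.sum_sub_distrib, Finset.mul_sum]
  refine Finset.sum_congr rfl fun C _ => ?_
  rw [← Finset.sum_sub_distrib, Finset.mul_sum]
  refine Finset.sum_congr rfl fun D _ => ?_
  rw [Delta]
  ring

lemma actE_ω (N : Matrix (Idx n) (Idx n) ℂ) (C : Idx n) :
    actE N (ω C) = ∑ A : Idx n, N C A • ω A := by
  simp only [actE, ω, ExteriorAlgebra.map_apply_ι, ← map_smul, ← map_sum]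
  congr 1
  ext A
  simp [Pi.single_apply]

lemma sum_smul_actE_mul_actE (N K : Matrix (Idx n) (Idx n) ℂ) :
    ∑ C : Idx n, ∑ D : Idx n, K C D • (actE N (ω C) * actE N (ω D))
      = ∑ A : Idx n, ∑ B : Idx n, (Nᵀ * K * N) A B • (ω A * ω B) := by
  have hCD : ∀ C D : Idx n, K C D • (actE N (ω C) * actE N (ω D))
      = ∑ A : Idx n, ∑ B : Idx n, (N C A * K C D * N D B) • (ω A * ω B) := by
    intro C D
    simp only [actE_ω, Finset.sum_mul, Finset.mul_sum, Finset.smul_sum, smul_mul_smul_comm,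
      smul_smul]
    rw [Finset.sum_comm]
    exact Finset.sum_congr rfl fun A _ => Finset.sum_congr rfl fun B _ => by ring_nf
  have hAB : ∀ A B : Idx n,
      (Nᵀ * K * N) A B = ∑ C : Idx n, ∑ D : Idx n, N C A * K C D * N D B := by
    intro A B
    simp only [mul_apply, transpose_apply, Finset.sum_mul]
    rw [Finset.sum_comm]
  simp only [hCD, hAB, Finset.sum_smul]
  simp only [← Fintype.sum_prod_type']
  -- reindex the quadruple sum by `(C, D, A, B) ↦ (A, B, C, D)`
  exact Fintype.sum_equiv
    ((Equiv.prodAssoc _ _ _).symm.trans ((Equiv.prodComm _ _).trans (Equiv.prodAssoc _ _ _)))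
    _ _ fun _ => rfl

end

/-- the Baston operator transforms covariantly under quaternionic
linear transformations: (Δ_{AB}u) = conj(τ(𝓤))ᵗ·(Δ_{CD}ũ∘𝓤)·conj(τ(𝓤));
equivalently Δu = Σ (Δ_{CD}ũ)(𝓤q)·ω̃^C∧ω̃^D with ω̃^C = conj(τ(𝓤)).ω^C. -/
theorem stmt_19 {n : ℕ} (U : Matrix (Fin n) (Fin n) ℍ[ℝ]) (ut : V4 n → ℝ)
    (hut : ContDiff ℝ 2 ut) (q : V4 n) :
    Matrix.of (fun A B : Idx n => Delta A B (fun y => ut (act U y)) q) =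
        (conjM (tau U))ᵀ * Matrix.of (fun C D : Idx n => Delta C D ut (act U q)) *
          conjM (tau U) ∧
      Baston (fun y => ut (act U y)) q =
        ∑ C : Idx n, ∑ D : Idx n, Delta C D ut (act U q) •
          (actE (conjM (tau U)) (ω C) * actE (conjM (tau U)) (ω D)) := by
  have hDelta : Matrix.of (fun A B : Idx n => Delta A B (fun y => ut (act U y)) q) =
      (conjM (tau U))ᵀ * Matrix.of (fun C D : Idx n => Delta C D ut (act U q)) *
        conjM (tau U) := by
    ext A B
    simp only [of_apply, mul_apply, transpose_apply, Finset.sum_mul, Delta_comp_act U hut q A B]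
    rw [Finset.sum_comm]
  refine ⟨hDelta, ?_⟩
  have hBaston :=
    sum_smul_actE_mul_actE (conjM (tau U)) (Matrix.of fun C D => Delta C D ut (act U q))
  rw [← hDelta] at hBaston
  exact hBaston.symm

end
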